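/- Let C ⊆ ℝ^p be a rational polytope defined by half-spaces {x ∈ ℝ^p : Σ_j α_{ij} x_j ≥ β_i} for i = 1,…,ℓ, where α_{ij} and β_i are integers. Let M be a positive integer with α_{ij} ≥ −M and |β_i| < M for all i,j, and let 0 < ε < 1 be a real number. Then there exists a positive integer m depending only on M, p and ε (not on C) such that for every extreme point v of C contained in [ε,1]^p, the point m·v is integral. -/

import Mathlib

/-!
At an extreme point `v` of `{x | ∀ i, β i ≤ α i ⬝ᵥ x}` the active rows span `ℝ^p`: otherwise `v`
could be moved both ways along a vector orthogonal to them without leaving the polyhedron. Hence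
`p` active rows form an integer matrix `Z` with `det Z ≠ 0` and `Z v ∈ ℤ^p`, and Cramer's rule gives
`det Z • v ∈ ℤ^p`. Because `v ∈ [ε,1]^p`, every entry of an active row is bounded by
`B = (p+1)M/ε`, so `0 < |det Z| ≤ p! B^p` and `m = (p! B^p)!` works for every polyhedron.
-/

open Matrix Filter Topology Finset

section Polyhedron

variable {ι n : Type*} [Fintype n]

def polyhedron (A : ι → n → ℝ) (b : ι → ℝ) : Set (n → ℝ) := {x | ∀ i, b i ≤ A i ⬝ᵥ x}

def activeSet (A : ι → n → ℝ) (b : ι → ℝ) (v : n → ℝ) : Set ι := {i | A i ⬝ᵥ v = b i}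

theorem exists_ne_zero_forall_dotProduct_eq_zero {K : Type*} [Field K] [DecidableEq n]
    {S : Set (n → K)} (hS : Submodule.span K S ≠ ⊤) : ∃ x ≠ 0, ∀ s ∈ S, s ⬝ᵥ x = 0 := by
  obtain ⟨f, hf, hSf⟩ := Submodule.exists_le_ker_of_lt_top _ hS.lt_top
  refine ⟨(dotProductEquiv K n).symm f, by simpa using hf, fun s hs => ?_⟩
  rw [dotProduct_comm, ← dotProductEquiv_apply_apply, LinearEquiv.apply_symm_apply]
  exact hSf (Submodule.subset_span hs)

theorem eq_zero_of_add_mem_of_sub_mem_of_mem_extremePoints {E : Type*} [AddCommGroup E]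
    [Module ℝ E] {C : Set E} {v x : E} (hv : v ∈ C.extremePoints ℝ) (hadd : v + x ∈ C)
    (hsub : v - x ∈ C) : x = 0 := by
  have hmid : v ∈ openSegment ℝ (v + x) (v - x) :=
    ⟨1 / 2, 1 / 2, by norm_num, by norm_num, by norm_num, by module⟩
  simpa using (hv.2 hadd hsub hmid)

theorem span_image_activeSet_eq_top [Finite ι] {A : ι → n → ℝ} {b : ι → ℝ} {v : n → ℝ}
    (hv : v ∈ (polyhedron A b).extremePoints ℝ) :
    Submodule.span ℝ (A '' activeSet A b v) = ⊤ := by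
  classical
  by_contra hspan
  obtain ⟨x, hx0, hx⟩ := exists_ne_zero_forall_dotProduct_eq_zero hspan
  have hnear : ∀ᶠ c in 𝓝 (0 : ℝ), v + c • x ∈ polyhedron A b := by
    refine eventually_all.2 fun i => ?_
    simp only [dotProduct_add, dotProduct_smul, smul_eq_mul]
    by_cases hi : i ∈ activeSet A b v
    · rw [hx _ (Set.mem_image_of_mem A hi), hi]
      exact .of_forall fun c => by simp
    · have hlt : b i < A i ⬝ᵥ v := lt_of_le_of_ne (hv.1 i) (Ne.symm hi)
      refine (Tendsto.eventually_const_lt hlt ?_).mono fun _ => le_of_lt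
      exact Continuous.tendsto' (by fun_prop) _ _ (by simp)
  have hpm : ∀ᶠ c in 𝓝[>] (0 : ℝ), 0 < c ∧ v + c • x ∈ polyhedron A b ∧
      v + (-c) • x ∈ polyhedron A b :=
    eventually_mem_nhdsWithin.and (nhdsWithin_le_nhds (hnear.and
      ((continuous_neg.tendsto' 0 0 neg_zero).eventually hnear)))
  obtain ⟨c, hc, hadd, hsub⟩ := hpm.exists
  rw [neg_smul, ← sub_eq_add_neg] at hsub
  exact hx0 ((smul_eq_zero.1
    (eq_zero_of_add_mem_of_sub_mem_of_mem_extremePoints hv hadd hsub)).resolve_left hc.ne')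

end Polyhedron

theorem exists_det_ne_zero_of_span_image_eq_top {ι n K : Type*} [Fintype n] [DecidableEq n]
    [Field K] {r : ι → n → K} {s : Set ι} (hs : Submodule.span K (r '' s) = ⊤) :
    ∃ f : n → ι, (∀ k, f k ∈ s) ∧ (Matrix.of fun k => r (f k)).det ≠ 0 := by
  obtain ⟨κ, a, -, hspan, hli⟩ := exists_linearIndependent' K fun i : s => r i
  rw [← Set.image_eq_range, hs] at hspan
  have := hli.finite
  have := Fintype.ofFinite κ
  have hcard : Fintype.card κ = Fintype.card n := by
    rw [← Module.finrank_eq_card_basis (Module.Basis.mk hli hspan.ge),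
      Module.finrank_fintype_fun_eq_card]
  let e : n ≃ κ := (Fintype.equivOfCardEq hcard).symm
  refine ⟨fun k => a (e k), fun k => (a (e k)).2, ?_⟩
  rw [← isUnit_iff_ne_zero, ← isUnit_iff_isUnit_det, ← linearIndependent_rows_iff_isUnit]
  exact hli.comp e e.injective

theorem abs_le_of_dotProduct_eq {n : Type*} [Fintype n] {a v : n → ℝ} {b M ε : ℝ}
    (hM : 0 ≤ M) (ha : ∀ j, -M ≤ a j) (hb : b ≤ M) (hε : 0 < ε) (hv : ∀ j, v j ∈ Set.Icc ε 1)
    (h : a ⬝ᵥ v = b) (j : n) : |a j| ≤ (Fintype.card n + 1) * M / ε := by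
  have hv0 : ∀ k, 0 ≤ v k := fun k => hε.le.trans (hv k).1
  have hε1 : ε ≤ 1 := (hv j).1.trans (hv j).2
  have hcard : (1 : ℝ) ≤ Fintype.card n := by
    exact_mod_cast Fintype.card_pos_iff.2 ⟨j⟩
  -- shifting every coefficient by `M` makes all terms of the sum nonnegative
  have hshift : (a j + M) * v j ≤ (Fintype.card n + 1) * M := by
    calc (a j + M) * v j ≤ ∑ k, (a k + M) * v k :=
          single_le_sum (f := fun k => (a k + M) * v k)
            (fun k _ => mul_nonneg (by linarith [ha k]) (hv0 k)) (mem_univ j)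
      _ = b + M * ∑ k, v k := by
          rw [← h, dotProduct, mul_sum, ← sum_add_distrib]; exact sum_congr rfl fun _ _ => by ring
      _ ≤ M + M * Fintype.card n := by
          gcongr
          simpa using sum_le_sum fun k (_ : k ∈ univ) => (hv k).2
      _ = (Fintype.card n + 1) * M := by ring
  have hupper : a j + M ≤ (Fintype.card n + 1) * M / ε := by
    rw [le_div_iff₀ hε]
    calc (a j + M) * ε ≤ (a j + M) * v j := by gcongr; linarith [ha j]; exact (hv j).1
      _ ≤ _ := hshift
  have hMle : M ≤ (Fintype.card n + 1) * M / ε := by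
    rw [le_div_iff₀ hε]; nlinarith
  rw [abs_le]; constructor <;> linarith [ha j]

theorem exists_int_eq_det_mul_of_mulVec_eq {n : Type*} [Fintype n] [DecidableEq n]
    (A : Matrix n n ℤ) (b : n → ℤ) {v : n → ℝ}
    (h : A.map (Int.cast : ℤ → ℝ) *ᵥ v = fun k => (b k : ℝ)) (j : n) :
    ∃ z : ℤ, (A.det : ℝ) * v j = z := by
  refine ⟨(A.adjugate *ᵥ b) j, ?_⟩
  have hcramer : (A.det : ℝ) • v = (A.map (Int.cast : ℤ → ℝ)).adjugate *ᵥ fun k => (b k : ℝ) := by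
    rw [← h, mulVec_mulVec, adjugate_mul, smul_mulVec, one_mulVec, ← Int.cast_det]
  have hcast := RingHom.map_mulVec (Int.castRingHom ℝ) A.adjugate b j
  rw [← smul_eq_mul, ← Pi.smul_apply, hcramer]
  exact (hcast.trans (by rw [← RingHom.mapMatrix_apply, RingHom.map_adjugate]; rfl)).symm

theorem exists_int_eq_natCast_mul_of_dvd {x : ℝ} {d z : ℤ} {m : ℕ} (hx : (d : ℝ) * x = z)
    (hd : d ∣ m) : ∃ z' : ℤ, (m : ℝ) * x = z' := by
  obtain ⟨c, hc⟩ := hd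
  refine ⟨c * z, ?_⟩
  rw [← Int.cast_natCast, hc]
  push_cast
  rw [← hx]; ring

theorem Int.abs_le_natFloor_of_abs_cast_le {z : ℤ} {x : ℝ} (h : |(z : ℝ)| ≤ x) :
    |z| ≤ ⌊x⌋₊ := by
  rw [Int.abs_eq_natAbs, Nat.cast_le]
  exact Nat.le_floor (by rwa [Nat.cast_natAbs, Int.cast_abs])

theorem Int.dvd_factorial {d : ℤ} {N : ℕ} (hd : d ≠ 0) (hdN : |d| ≤ N) :
    d ∣ (N.factorial : ℤ) := by
  refine Int.natAbs_dvd.1 (Int.natCast_dvd_natCast.2 (Nat.dvd_factorial (Int.natAbs_pos.2 hd) ?_))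
  rw [Int.abs_eq_natAbs] at hdN
  exact_mod_cast hdN

theorem stmt_0_general (p M : ℕ) (ε : ℝ) (hε0 : 0 < ε) :
    ∃ m : ℕ, 0 < m ∧
      ∀ (ℓ : ℕ) (α : Fin ℓ → Fin p → ℤ) (β : Fin ℓ → ℤ),
        (∀ i j, -(M : ℤ) ≤ α i j) →
        (∀ i, |β i| < (M : ℤ)) →
        ∀ C : Set (Fin p → ℝ),
          C = {x | ∀ i, (β i : ℝ) ≤ ∑ j, (α i j : ℝ) * x j} →
          IsCompact C →
          ∀ v ∈ C,
            (∀ u ∈ C, ∀ w ∈ C, ∀ t : ℝ, 0 < t → t < 1 →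
              t • u + (1 - t) • w = v → u = v ∧ w = v) →
            (∀ j, v j ∈ Set.Icc ε 1) →
            ∀ j, ∃ z : ℤ, (m : ℝ) * v j = z := by
  set B : ℕ := ⌊(p + 1) * M / ε⌋₊
  refine ⟨(p.factorial * B ^ p).factorial, Nat.factorial_pos _, ?_⟩
  rintro ℓ α β hα hβ C rfl - v hvC hext hv
  set A : Fin ℓ → Fin p → ℝ := fun i j => α i j
  have hvext : v ∈ (polyhedron A fun i => (β i : ℝ)).extremePoints ℝ :=
    ⟨hvC, fun u hu w hw ⟨a, c, ha, hc, hac, huw⟩ =>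
      (hext u hu w hw a ha (by linarith) (by rwa [eq_sub_of_add_eq' hac] at huw)).1⟩
  obtain ⟨f, hf, hdet⟩ :=
    exists_det_ne_zero_of_span_image_eq_top (span_image_activeSet_eq_top hvext)
  set Z : Matrix (Fin p) (Fin p) ℤ := Matrix.of fun k j => α (f k) j
  have hZ : ∀ k j, |Z k j| ≤ B := fun k j => by
    have hreal := abs_le_of_dotProduct_eq (M := M) M.cast_nonneg
      (fun j => by simp only [A]; exact_mod_cast hα (f k) j)
      (by simp only; exact_mod_cast (le_abs_self _).trans (hβ (f k)).le) hε0 hv (hf k) j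
    rw [Fintype.card_fin] at hreal
    exact Int.abs_le_natFloor_of_abs_cast_le hreal
  have hZdet : Z.det ≠ 0 := by
    rw [Ne, ← Int.cast_eq_zero (α := ℝ), Int.cast_det]
    exact hdet
  have hdvd : Z.det ∣ ((p.factorial * B ^ p).factorial : ℤ) :=
    Int.dvd_factorial hZdet (by simpa using Matrix.det_le (abv := AbsoluteValue.abs) hZ)
  intro j
  obtain ⟨z, hz⟩ := exists_int_eq_det_mul_of_mulVec_eq Z (fun k => β (f k)) (funext hf) j
  exact exists_int_eq_natCast_mul_of_dvd hz hdvd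

/-- Extreme points of a rational polytope cut out by integral inequalities with
entries bounded below by `-M` and right-hand sides bounded by `M` in absolute value,
which lie in `[ε,1]^p`, have denominators bounded by a constant `m = m(M,p,ε)`. -/
theorem stmt_0 (p M : ℕ) (hM : 0 < M) (ε : ℝ) (hε0 : 0 < ε) (hε1 : ε < 1) :
    ∃ m : ℕ, 0 < m ∧
      ∀ (ℓ : ℕ) (α : Fin ℓ → Fin p → ℤ) (β : Fin ℓ → ℤ),
        (∀ i j, -(M : ℤ) ≤ α i j) →
        (∀ i, |β i| < (M : ℤ)) →
        ∀ C : Set (Fin p → ℝ),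
          C = {x | ∀ i, (β i : ℝ) ≤ ∑ j, (α i j : ℝ) * x j} →
          IsCompact C →
          ∀ v ∈ C,
            (∀ u ∈ C, ∀ w ∈ C, ∀ t : ℝ, 0 < t → t < 1 →
              t • u + (1 - t) • w = v → u = v ∧ w = v) →
            (∀ j, v j ∈ Set.Icc ε 1) →
            ∀ j, ∃ z : ℤ, (m : ℝ) * v j = z :=
  stmt_0_general p M ε hε0
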